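/- Let Γ be the n × n upper triangular all-ones matrix (Γᵢⱼ = 1 for i ≤ j, else 0) and for k ∈ ℤ define m_{k,j} = Σᵢ (Γᵏ)ᵢⱼ (column sums of powers of Γ). Then for all k ≥ 1 and 1 ≤ j ≤ n: m_{−k,j} = (−1)^{j−1} C(k−1, j−1), and for all k ≥ 0: m_{k,j} = C(j+k−1, k). -/

import Mathlib

/-!
Column sums of `Γ ^ k` form the row vector `1 ᵥ* Γ ^ k`, and right multiplication by `Γ` takes
prefix sums, so `m (k + 1)` is the sequence of prefix sums of `m k`. Upwards from `m 0 = 1` this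
is the hockey-stick identity. Downwards, the prefix sums of `(-1) ^ t * C(k + 1, t)` are
`(-1) ^ j * C(k, j)`, and since `Γ` is invertible, `m (-(k + 1))` is the unique vector whose prefix
sums are `m (-k)`.
-/

open Finset Matrix

def upperOnes (R : Type*) [Zero R] [One R] (n : ℕ) : Matrix (Fin n) (Fin n) R :=
  Matrix.of fun i j => if i ≤ j then 1 else 0

section UpperOnes

variable {R : Type*} {n : ℕ}

theorem upperOnes_det [CommRing R] : (upperOnes R n).det = 1 := by
  rw [det_of_isUpperTriangular (M := upperOnes R n) fun i j hij => if_neg (not_le.mpr hij)]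
  simp [upperOnes]

theorem isUnit_upperOnes_det [CommRing R] : IsUnit (upperOnes R n).det := by
  simp [upperOnes_det]

theorem vecMul_upperOnes_apply [NonAssocSemiring R] (f : ℕ → R) (j : Fin n) :
    ((fun i : Fin n => f i) ᵥ* upperOnes R n) j = ∑ t ∈ range (j + 1), f t := by
  have hfilter : (range n).filter (· ≤ (j : ℕ)) = range (j + 1) := by
    ext t; simp only [mem_filter, mem_range]; omega
  simp only [vecMul, dotProduct, upperOnes, of_apply, mul_ite, mul_one, mul_zero, Fin.le_def]
  rw [Fin.sum_univ_eq_sum_range (fun t => if t ≤ (j : ℕ) then f t else 0), ← sum_filter,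
    hfilter]

end UpperOnes

section Zpow

variable {R : Type*} [CommRing R] {n : ℕ} {A : Matrix (Fin n) (Fin n) R}

theorem vecMul_zpow_add_one (hA : IsUnit A.det) (v : Fin n → R) (k : ℤ) :
    v ᵥ* A ^ (k + 1) = (v ᵥ* A ^ k) ᵥ* A := by
  rw [zpow_add_one hA, vecMul_vecMul]

theorem eq_vecMul_zpow_sub_one_of_vecMul_eq (hA : IsUnit A.det) {v w : Fin n → R} {k : ℤ}
    (h : w ᵥ* A = v ᵥ* A ^ k) : w = v ᵥ* A ^ (k - 1) :=
  vecMul_injective_of_isUnit ((isUnit_iff_isUnit_det A).mpr hA) <| by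
    simp only [h, ← vecMul_zpow_add_one hA, sub_add_cancel]

end Zpow

section ColumnSums

variable {n : ℕ}

theorem one_vecMul_upperOnes_pow (k : ℕ) :
    (1 : Fin n → ℤ) ᵥ* upperOnes ℤ n ^ (k : ℤ) =
      fun j : Fin n => (((j : ℕ) + k).choose k : ℤ) := by
  induction k with
  | zero => funext j; simp
  | succ k ih =>
    funext j
    rw [Nat.cast_succ, vecMul_zpow_add_one isUnit_upperOnes_det, ih,
      vecMul_upperOnes_apply (fun t => ((t + k).choose k : ℤ)), ← add_assoc]
    exact_mod_cast Nat.sum_range_add_choose j k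

theorem one_vecMul_upperOnes_zpow_neg (k : ℕ) :
    (1 : Fin n → ℤ) ᵥ* upperOnes ℤ n ^ (-(k + 1 : ℤ)) =
      fun j : Fin n => (-1) ^ (j : ℕ) * (k.choose j : ℤ) := by
  induction k with
  | zero =>
    symm
    rw [show (-((0 : ℕ) + 1 : ℤ)) = 0 - 1 by norm_num]
    refine eq_vecMul_zpow_sub_one_of_vecMul_eq isUnit_upperOnes_det ?_
    funext j
    rw [vecMul_upperOnes_apply (fun t => (-1) ^ t * (Nat.choose 0 t : ℤ))]
    simp [sum_range_succ']
  | succ k ih =>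
    symm
    rw [show (-((k + 1 : ℕ) + 1 : ℤ)) = -(k + 1 : ℤ) - 1 by push_cast; ring]
    refine eq_vecMul_zpow_sub_one_of_vecMul_eq isUnit_upperOnes_det ?_
    rw [ih]
    funext j
    rw [vecMul_upperOnes_apply (fun t => (-1) ^ t * ((k + 1).choose t : ℤ))]
    exact_mod_cast Int.alternating_sum_range_choose_eq_choose

end ColumnSums

/-- let `Γ` be the `n × n` upper triangular all-ones integer matrix and
`m k j = ∑ᵢ (Γ^k)ᵢⱼ` the column sums of its integer powers (vertices/indices are
`1`-based in the paper, `0`-based here via `Fin n`). Then for all `k ≥ 1` and all `j`,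
`m (-k) j = (-1)^(j-1) * C(k-1, j-1)`, and for all `k ≥ 0`, `m k j = C(j+k-1, k)`. -/
theorem stmt_9 {n : ℕ} (Γ : Matrix (Fin n) (Fin n) ℤ)
    (hΓ : ∀ i j : Fin n, Γ i j = if i ≤ j then 1 else 0)
    (m : ℤ → Fin n → ℤ)
    (hm : ∀ (k : ℤ) (j : Fin n), m k j = ∑ i : Fin n, (Γ ^ k) i j) :
    (∀ k : ℕ, 1 ≤ k → ∀ j : Fin n,
        m (-(k : ℤ)) j = (-1 : ℤ) ^ (j : ℕ) * ((k - 1).choose (j : ℕ) : ℤ)) ∧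
      (∀ k : ℕ, ∀ j : Fin n,
        m (k : ℤ) j = (((j : ℕ) + k).choose k : ℤ)) := by
  obtain rfl : Γ = upperOnes ℤ n := Matrix.ext hΓ
  have hm_vecMul : ∀ k, m k = (1 : Fin n → ℤ) ᵥ* upperOnes ℤ n ^ k := fun k => by
    funext j; simp [hm, vecMul, dotProduct]
  refine ⟨fun k hk j => ?_, fun k j => ?_⟩
  · obtain ⟨k, rfl⟩ := Nat.exists_eq_add_of_le' hk
    rw [hm_vecMul, Nat.cast_succ, one_vecMul_upperOnes_zpow_neg, Nat.add_sub_cancel]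
  · rw [hm_vecMul, one_vecMul_upperOnes_pow]
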